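/- arXiv:2202.02561 — 5 statements merged into one kernel-verified Lean document; each statement's English description precedes it below -/
import Mathlib

section
/- Assume (A). Then λ u_λ(x̄) = f̲ for every x̄ ∈ 𝔐 and every λ > 0, and for all x ∈ ℝⁿ and λ > 0 one has |λ u_λ(x) − f̲| ≤ λ √(4‖f‖∞) · dist(x,𝔐); consequently λ u_λ(x) → f̲ locally uniformly on ℝⁿ as λ → 0⁺. -/
open MeasureTheory Filter Metric Set Topology

noncomputable section

/-- `n`-dimensional Euclidean space. -/
abbrev Euc (n : ℕ) := EuclideanSpace ℝ (Fin n)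

variable {n : ℕ}

/-- Trajectory of the control system `ẏ = α`, `y 0 = x`. -/
def traj (x : Euc n) (α : ℝ → Euc n) (t : ℝ) : Euc n :=
  x + ∫ s in Set.Ioc (0 : ℝ) t, α s

/-- The sup norm `‖f‖∞ = sup_x |f x|`. -/
def supNorm (f : Euc n → ℝ) : ℝ := ⨆ x, |f x|

/-- Running cost of the infinite-horizon discounted control problem. -/
def dCost (f : Euc n → ℝ) (lam : ℝ) (x : Euc n) (α : ℝ → Euc n) (t : ℝ) : ℝ :=
  ((1 / 2) * ‖α t‖ ^ 2 + f (traj x α t)) * Real.exp (-(lam * t))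

/-- Value function `u_λ` of the infinite-horizon discounted control problem:
the infimum of the total discounted cost over measurable controls (with finite cost). -/
def uLam (f : Euc n → ℝ) (lam : ℝ) (x : Euc n) : ℝ :=
  sInf {c : ℝ | ∃ α : ℝ → Euc n, Measurable α ∧
    IntegrableOn (dCost f lam x α) (Set.Ioi 0) volume ∧
    c = ∫ t in Set.Ioi (0 : ℝ), dCost f lam x α t}

/-- Running cost of the finite-horizon control problem. -/
def fCost (f : Euc n → ℝ) (x : Euc n) (α : ℝ → Euc n) (s : ℝ) : ℝ :=
  (1 / 2) * ‖α s‖ ^ 2 + f (traj x α s)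

/-- Value function `u(x,t)` of the finite-horizon control problem. -/
def uT (f : Euc n → ℝ) (x : Euc n) (t : ℝ) : ℝ :=
  sInf {c : ℝ | ∃ α : ℝ → Euc n, Measurable α ∧
    IntegrableOn (fCost f x α) (Set.Ioc 0 t) volume ∧
    c = ∫ s in Set.Ioc (0 : ℝ) t, fCost f x α s}

end

/-!
Since `f ≥ f̲`, every control costs at least `f̲ / λ`. Conversely, from `x` move at constant
speed to a point `z ∈ 𝔐` nearest to `x` during a time `T` and stop there: the running cost
exceeds `f̲ e^{-λt}` by at most `|z - x|² / (2T²) + 2‖f‖∞` on `(0, T]` and not at all afterwards,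
so `u_λ(x) ≤ f̲ / λ + |z - x|² / (2T) + 2‖f‖∞ T`, whose infimum over `T > 0` is
`|z - x| √(4‖f‖∞)`. The resulting bound is `λ` times the continuous function
`√(4‖f‖∞) dist(·, 𝔐)`, which gives locally uniform convergence.
-/

open Real

lemma integrableOn_exp_neg_mul_Ioi {lam : ℝ} (hl : 0 < lam) (a : ℝ) :
    IntegrableOn (fun t : ℝ => exp (-(lam * t))) (Ioi a) := by
  simpa only [neg_mul] using integrableOn_exp_mul_Ioi (neg_neg_of_pos hl) a

lemma integral_exp_neg_mul_Ioi_zero {lam : ℝ} (hl : 0 < lam) :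
    ∫ t in Ioi (0 : ℝ), exp (-(lam * t)) = lam⁻¹ := by
  simp only [← neg_mul]
  rw [integral_exp_mul_Ioi (neg_neg_of_pos hl)]
  simp

lemma le_mul_sqrt_of_forall_le {a d s : ℝ} (hd : 0 ≤ d) (hs : 0 ≤ s)
    (h : ∀ T > 0, a ≤ d ^ 2 / (2 * T) + 2 * s * T) : a ≤ d * √(4 * s) := by
  -- `T = d / √(4s)` is optimal when `d, s > 0`; perturb both by `δ` and let `δ → 0`.
  have hδ : ∀ δ > 0, a ≤ (d + δ) * √(4 * (s + δ)) := by
    intro δ hδ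
    set K := √(4 * (s + δ))
    have hK : 0 < K := sqrt_pos.2 (by linarith)
    have hK2 : K ^ 2 = 4 * (s + δ) := sq_sqrt (by linarith)
    have hT : 0 < (d + δ) / K := by positivity
    calc a ≤ d ^ 2 / (2 * ((d + δ) / K)) + 2 * s * ((d + δ) / K) := h _ hT
      _ ≤ (d + δ) ^ 2 / (2 * ((d + δ) / K)) + 2 * (s + δ) * ((d + δ) / K) := by
        gcongr <;> linarith
      _ = (d + δ) * K := by
        field_simp
        linear_combination -hK2
  have hlim : Tendsto (fun δ => (d + δ) * √(4 * (s + δ))) (𝓝[>] 0) (𝓝 (d * √(4 * s))) := by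
    have : Continuous fun δ : ℝ => (d + δ) * √(4 * (s + δ)) := by fun_prop
    simpa using this.continuousWithinAt (s := Ioi 0) (x := 0) |>.tendsto
  exact ge_of_tendsto hlim (eventually_nhdsWithin_of_forall hδ)

lemma tendstoLocallyUniformly_nhdsGT_zero_of_abs_sub_le {X : Type*} [TopologicalSpace X]
    {F : ℝ → X → ℝ} {g h : X → ℝ} (hh : Continuous h)
    (hF : ∀ lam > 0, ∀ x, |F lam x - g x| ≤ lam * h x) :
    TendstoLocallyUniformly F g (𝓝[>] 0) := by
  rw [Metric.tendstoLocallyUniformly_iff]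
  intro ε hε x
  have hC : 0 < |h x| + 1 := by positivity
  refine ⟨{y | h y < h x + 1}, (isOpen_lt hh continuous_const).mem_nhds (lt_add_one (h x)), ?_⟩
  filter_upwards [Ioo_mem_nhdsGT (div_pos hε hC)] with lam ⟨hl, hlε⟩ y hy
  rw [dist_comm, Real.dist_eq]
  calc |F lam y - g y| ≤ lam * h y := hF lam hl y
    _ ≤ lam * (|h x| + 1) := by gcongr; linarith [le_abs_self (h x), show h y < h x + 1 from hy]
    _ < ε := (lt_div_iff₀ hC).1 hlε

section ControlProblem

variable {n : ℕ} {f : Euc n → ℝ} {flo M lam : ℝ}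

lemma abs_le_supNorm {fhi : ℝ} (hlo : ∀ x, flo ≤ f x) (hhi : ∀ x, f x ≤ fhi) (x : Euc n) :
    |f x| ≤ supNorm f := by
  refine le_ciSup (f := fun y => |f y|) ⟨max |flo| |fhi|, ?_⟩ x
  rintro _ ⟨y, rfl⟩
  exact abs_le_max_abs_abs (hlo y) (hhi y)

lemma traj_eq_add_intervalIntegral (x : Euc n) (α : ℝ → Euc n) (t : ℝ) :
    traj x α t = x + ∫ s in (0 : ℝ)..max t 0, α s := by
  rcases le_total t 0 with ht | ht
  · simp [traj, ht]
  · rw [traj, max_eq_left ht, intervalIntegral.integral_of_le ht]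

lemma continuous_traj (x : Euc n) {α : ℝ → Euc n} (hα : Integrable α) :
    Continuous (traj x α) := by
  rw [funext (traj_eq_add_intervalIntegral x α)]
  exact continuous_const.add <|
    (intervalIntegral.continuous_primitive (fun _ _ => hα.intervalIntegrable) 0).comp
      (continuous_id.max continuous_const)

lemma traj_indicator_const (x v : Euc n) {T t : ℝ} (hT : 0 ≤ T) (ht : 0 ≤ t) :
    traj x ((Ioc 0 T).indicator fun _ => v) t = x + min T t • v := by
  rw [traj, integral_indicator_const v measurableSet_Ioc,
    measureReal_restrict_apply measurableSet_Ioc, Ioc_inter_Ioc, max_self,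
    volume_real_Ioc_of_le (le_min hT ht), sub_zero]

lemma integrableOn_dCost_zero (hl : 0 < lam) (x : Euc n) :
    IntegrableOn (dCost f lam x 0) (Ioi 0) := by
  have h : dCost f lam x 0 = fun t => f x * exp (-(lam * t)) := by
    funext t
    simp [dCost, traj]
  rw [h]
  exact (integrableOn_exp_neg_mul_Ioi hl 0).const_mul _

lemma integrableOn_dCost {C : ℝ} (hf : Continuous f) (hfM : ∀ y, |f y| ≤ M) (hl : 0 < lam)
    (x : Euc n) {α : ℝ → Euc n} (hα : Integrable α) (hαC : ∀ t, ‖α t‖ ≤ C) :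
    IntegrableOn (dCost f lam x α) (Ioi 0) := by
  refine Integrable.mono' ((integrableOn_exp_neg_mul_Ioi hl 0).const_mul ((1 / 2) * C ^ 2 + M))
    ?_ (ae_of_all _ fun t => ?_)
  · have hmeas : AEStronglyMeasurable
        (fun t => ((1 / 2) * ‖α t‖ ^ 2 + f (traj x α t)) * exp (-(lam * t))) :=
      (((hα.aestronglyMeasurable.norm.pow 2).const_mul _).add
        (hf.comp (continuous_traj x hα)).aestronglyMeasurable).mul
        (by fun_prop : Continuous _).aestronglyMeasurable
    exact hmeas.restrict
  · have hα2 : ‖α t‖ ^ 2 ≤ C ^ 2 := pow_le_pow_left₀ (norm_nonneg _) (hαC t) 2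
    rw [dCost, norm_mul, Real.norm_of_nonneg (exp_pos _).le, Real.norm_eq_abs]
    gcongr
    calc |(1 / 2) * ‖α t‖ ^ 2 + f (traj x α t)| ≤ (1 / 2) * ‖α t‖ ^ 2 + |f (traj x α t)| := by
          refine (abs_add_le _ _).trans_eq ?_
          rw [abs_of_nonneg (by positivity)]
      _ ≤ (1 / 2) * C ^ 2 + M := by linarith [hfM (traj x α t)]

lemma div_le_integral_dCost (hlo : ∀ y, flo ≤ f y) (hl : 0 < lam) (x : Euc n) {α : ℝ → Euc n}
    (hint : IntegrableOn (dCost f lam x α) (Ioi 0)) :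
    flo / lam ≤ ∫ t in Ioi 0, dCost f lam x α t := by
  calc flo / lam = ∫ t in Ioi (0 : ℝ), flo * exp (-(lam * t)) := by
        rw [integral_const_mul, integral_exp_neg_mul_Ioi_zero hl, div_eq_mul_inv]
    _ ≤ ∫ t in Ioi 0, dCost f lam x α t := by
      refine setIntegral_mono_on ((integrableOn_exp_neg_mul_Ioi hl 0).const_mul flo) hint
        measurableSet_Ioi fun t _ => mul_le_mul_of_nonneg_right ?_ (exp_pos _).le
      linarith [hlo (traj x α t), sq_nonneg ‖α t‖]

lemma uLam_le_integral_dCost (hlo : ∀ y, flo ≤ f y) (hl : 0 < lam) (x : Euc n)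
    {α : ℝ → Euc n} (hα : Measurable α) (hint : IntegrableOn (dCost f lam x α) (Ioi 0)) :
    uLam f lam x ≤ ∫ t in Ioi 0, dCost f lam x α t := by
  refine csInf_le ⟨flo / lam, ?_⟩ ⟨α, hα, hint, rfl⟩
  rintro _ ⟨β, -, hβ, rfl⟩
  exact div_le_integral_dCost hlo hl x hβ

lemma div_le_uLam (hlo : ∀ y, flo ≤ f y) (hl : 0 < lam) (x : Euc n) :
    flo / lam ≤ uLam f lam x := by
  refine le_csInf ⟨_, 0, measurable_const, integrableOn_dCost_zero hl x, rfl⟩ ?_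
  rintro _ ⟨α, -, hα, rfl⟩
  exact div_le_integral_dCost hlo hl x hα

lemma uLam_le_of_steer (hf : Continuous f) (hlo : ∀ y, flo ≤ f y) (hfM : ∀ y, |f y| ≤ M)
    (hl : 0 < lam) (x : Euc n) {z : Euc n} (hz : f z = flo) {T : ℝ} (hT : 0 < T) :
    uLam f lam x ≤ flo / lam + (‖z - x‖ ^ 2 / (2 * T) + 2 * M * T) := by
  set v : Euc n := T⁻¹ • (z - x)
  set α : ℝ → Euc n := (Ioc 0 T).indicator fun _ => v
  set c := (1 / 2) * ‖v‖ ^ 2 + 2 * M with hc_def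
  have hα : Integrable α :=
    (integrable_indicator_iff measurableSet_Ioc).2 (integrableOn_const (by simp))
  have hint := integrableOn_dCost hf hfM hl x hα fun t => norm_indicator_le_norm_self _ _
  have hexp := (integrableOn_exp_neg_mul_Ioi hl 0).const_mul flo
  have hc : IntegrableOn ((Ioc 0 T).indicator fun _ => c) (Ioi 0) :=
    ((integrable_indicator_iff measurableSet_Ioc).2 (integrableOn_const (by simp))).integrableOn
  have hbound : ∀ t ∈ Ioi (0 : ℝ),
      dCost f lam x α t ≤ (Ioc 0 T).indicator (fun _ => c) t + flo * exp (-(lam * t)) := by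
    intro t ht
    by_cases htT : t ≤ T
    · have hmem : t ∈ Ioc 0 T := ⟨ht, htT⟩
      have he : exp (-(lam * t)) ≤ 1 := exp_le_one_iff.2 (by nlinarith [ht.out])
      have hfy := abs_le.1 (hfM (traj x α t))
      have hflo := abs_le.1 (hz ▸ hfM z)
      have hpos : 0 ≤ (1 / 2) * ‖v‖ ^ 2 + f (traj x α t) - flo := by
        nlinarith [hlo (traj x α t), sq_nonneg ‖v‖]
      rw [dCost, show α t = v from indicator_of_mem hmem _, indicator_of_mem hmem]
      nlinarith [mul_nonneg hpos (sub_nonneg.2 he)]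
    · have hmem : t ∉ Ioc 0 T := fun h => htT h.2
      have htraj : traj x α t = z := by
        rw [traj_indicator_const x v hT.le (le_of_lt ht), min_eq_left (le_of_not_ge htT),
          smul_smul, mul_inv_cancel₀ hT.ne', one_smul, add_sub_cancel]
      rw [dCost, show α t = 0 from indicator_of_notMem hmem _, indicator_of_notMem hmem, htraj, hz]
      simp
  have hv : ‖v‖ ^ 2 = ‖z - x‖ ^ 2 / T ^ 2 := by
    rw [norm_smul, mul_pow, norm_inv, Real.norm_of_nonneg hT.le]
    field_simp
  calc uLam f lam x ≤ ∫ t in Ioi 0, dCost f lam x α t :=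
        uLam_le_integral_dCost hlo hl x (measurable_const.indicator measurableSet_Ioc) hint
    _ ≤ ∫ t in Ioi 0, ((Ioc 0 T).indicator (fun _ => c) t + flo * exp (-(lam * t))) :=
        setIntegral_mono_on hint (hc.add hexp) measurableSet_Ioi hbound
    _ = c * T + flo / lam := by
        rw [integral_add hc hexp, integral_indicator_const c measurableSet_Ioc,
          measureReal_restrict_apply measurableSet_Ioc, inter_eq_left.2 Ioc_subset_Ioi_self,
          volume_real_Ioc_of_le hT.le, integral_const_mul, integral_exp_neg_mul_Ioi_zero hl]
        simp [div_eq_mul_inv, mul_comm]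
    _ = flo / lam + (‖z - x‖ ^ 2 / (2 * T) + 2 * M * T) := by
        rw [hc_def, hv]
        field_simp
        ring

lemma abs_lam_mul_uLam_sub_le (hf : Continuous f) (hlo : ∀ y, flo ≤ f y)
    (hfM : ∀ y, |f y| ≤ M) (hl : 0 < lam) (x : Euc n) (hne : {z | f z = flo}.Nonempty) :
    |lam * uLam f lam x - flo| ≤ lam * √(4 * M) * infDist x {z | f z = flo} := by
  obtain ⟨z, hz, hdist⟩ := (isClosed_eq hf continuous_const).exists_infDist_eq_dist hne x
  have hM : 0 ≤ M := (abs_nonneg _).trans (hfM x)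
  have hsteer : uLam f lam x - flo / lam ≤ ‖z - x‖ * √(4 * M) :=
    le_mul_sqrt_of_forall_le (norm_nonneg _) hM fun T hT => by
      linarith [uLam_le_of_steer hf hlo hfM hl x hz hT]
  have hlow : flo ≤ lam * uLam f lam x := by
    have := mul_le_mul_of_nonneg_left (div_le_uLam hlo hl x) hl.le
    rwa [mul_div_cancel₀ _ hl.ne'] at this
  rw [abs_of_nonneg (sub_nonneg.2 hlow), hdist, dist_comm, dist_eq_norm]
  calc lam * uLam f lam x - flo = lam * (uLam f lam x - flo / lam) := by
        field_simp
    _ ≤ lam * (‖z - x‖ * √(4 * M)) := by gcongr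
    _ = lam * √(4 * M) * ‖z - x‖ := by ring

end ControlProblem

/-- under assumptions (A), `lam * u_lam = flo` on the argmin set,
`|lam * u_lam x - flo| ≤ lam √(4‖f‖∞) dist(x, 𝔐)`, and `lam * u_lam → flo`
locally uniformly as `lam → 0⁺`. -/
theorem stmt1 {n : ℕ} (f : Euc n → ℝ) (flo fhi : ℝ)
    (hcont : Continuous f) (hlo : ∀ x, flo ≤ f x) (hhi : ∀ x, f x ≤ fhi)
    (hattain : ∃ x, f x = flo) :
    (∀ lam : ℝ, 0 < lam → ∀ x ∈ {z : Euc n | f z = flo}, lam * uLam f lam x = flo) ∧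
    (∀ lam : ℝ, 0 < lam → ∀ x : Euc n,
      |lam * uLam f lam x - flo| ≤
        lam * Real.sqrt (4 * supNorm f) * Metric.infDist x {z : Euc n | f z = flo}) ∧
    TendstoLocallyUniformly (fun (lam : ℝ) (x : Euc n) => lam * uLam f lam x)
      (fun _ => flo) (𝓝[>] (0 : ℝ)) := by
  have hbound : ∀ lam : ℝ, 0 < lam → ∀ x : Euc n,
      |lam * uLam f lam x - flo| ≤ lam * √(4 * supNorm f) * infDist x {z | f z = flo} :=
    fun lam hl x => abs_lam_mul_uLam_sub_le hcont hlo (abs_le_supNorm hlo hhi) hl x hattain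
  refine ⟨fun lam hl x hx => ?_, hbound, ?_⟩
  · have h := hbound lam hl x
    rwa [infDist_zero_of_mem hx, mul_zero, abs_nonpos_iff, sub_eq_zero] at h
  · refine tendstoLocallyUniformly_nhdsGT_zero_of_abs_sub_le
      ((continuous_infDist_pt {z | f z = flo}).const_mul (√(4 * supNorm f))) fun lam hl x => ?_
    rw [← mul_assoc]
    exact hbound lam hl x
end

section
/- Assume (A) and (B). Then for every t ≥ 0 the function x ↦ u(x,t) is C̃₃-semiconcave with C̃₃ := √(C₁ + C₂), i.e. u(x+h,t) + u(x−h,t) − 2u(x,t) ≤ C̃₃ |h|² for all x, h ∈ ℝⁿ; in particular the semiconcavity constant is independent of t. -/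
open MeasureTheory Filter Metric Set Topology

/-!
Take a nearly optimal control `α` from `x` with trajectory `y`, put `m = √C` and steer from
`x ± h` with the controls `α ∓ m e^{-ms} h`, whose trajectories are `y(s) ± e^{-ms} h`. By the
parallelogram law and the semiconcavity of `f`, the two perturbed running costs exceed twice the
cost of `α` by at most `2C e^{-2ms} |h|²`, whose integral over `[0, t]` is at most `√C |h|²`
(for a general rate `m` the bound is `(C + m²) |h|² / (2m)`, minimal at `m = √C`).
Applied with `C = max C₂ 0`, this constant is at most `√(C₁ + C₂)` since the Lipschitz constant
`C₁` is nonnegative.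
-/

open Real

def IsSemiconcave {E : Type*} [NormedAddCommGroup E] (C : ℝ) (g : E → ℝ) : Prop :=
  ∀ x h : E, g (x + h) + g (x - h) - 2 * g x ≤ C * ‖h‖ ^ 2

lemma IsSemiconcave.mono {E : Type*} [NormedAddCommGroup E] {C C' : ℝ} {g : E → ℝ}
    (hg : IsSemiconcave C g) (hC : C ≤ C') : IsSemiconcave C' g :=
  fun x h => (hg x h).trans (by gcongr)

lemma integral_Ioc_mul_exp_neg_mul (m : ℝ) {s : ℝ} (hs : 0 ≤ s) :
    ∫ r in Ioc 0 s, m * exp (-(m * r)) = 1 - exp (-(m * s)) := by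
  have hderiv (r : ℝ) : HasDerivAt (fun r => -exp (-(m * r))) (m * exp (-(m * r))) r := by
    simpa [mul_comm] using (((hasDerivAt_id r).const_mul m).neg.exp).fun_neg
  rw [← intervalIntegral.integral_of_le hs,
    intervalIntegral.integral_eq_sub_of_hasDerivAt (fun r _ => hderiv r)
      ((by fun_prop : Continuous fun r => m * exp (-(m * r))).intervalIntegrable _ _)]
  simp only [mul_zero, neg_zero, exp_zero]
  ring

variable {n : ℕ}

noncomputable def dampedShift (m : ℝ) (h : Euc n) (r : ℝ) : Euc n := (m * exp (-(m * r))) • h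

lemma continuous_dampedShift (m : ℝ) (h : Euc n) : Continuous (dampedShift m h) := by
  unfold dampedShift
  fun_prop

lemma memLp_dampedShift (m : ℝ) (h : Euc n) (t : ℝ) :
    MemLp (dampedShift m h) 2 (volume.restrict (Ioc 0 t)) :=
  (memLp_two_iff_integrable_sq_norm (continuous_dampedShift m h).aestronglyMeasurable).2
    ((continuous_dampedShift m h).norm.pow 2).integrableOn_Ioc

lemma exp_neg_mul_sq (m s : ℝ) : exp (-(m * s)) ^ 2 = exp (-(2 * m * s)) := by
  rw [sq, ← exp_add]
  ring_nf

lemma norm_dampedShift_sq (m : ℝ) (h : Euc n) (r : ℝ) :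
    ‖dampedShift m h r‖ ^ 2 = m ^ 2 * exp (-(2 * m * r)) * ‖h‖ ^ 2 := by
  rw [dampedShift, norm_smul, mul_pow, Real.norm_eq_abs, sq_abs, mul_pow, exp_neg_mul_sq]

lemma integral_dampedShift (m : ℝ) (h : Euc n) {s : ℝ} (hs : 0 ≤ s) :
    ∫ r in Ioc 0 s, dampedShift m h r = (1 - exp (-(m * s))) • h := by
  simp only [dampedShift]
  rw [integral_smul_const, integral_Ioc_mul_exp_neg_mul m hs]

lemma traj_add_sub_dampedShift {x h : Euc n} {α : ℝ → Euc n} {m s : ℝ} (hs : 0 ≤ s)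
    (hα : IntegrableOn α (Ioc 0 s)) :
    traj (x + h) (α - dampedShift m h) s = traj x α s + exp (-(m * s)) • h := by
  simp only [traj, Pi.sub_apply]
  rw [integral_sub hα (continuous_dampedShift m h).integrableOn_Ioc, integral_dampedShift m h hs,
    sub_smul, one_smul]
  abel

lemma fCost_add_fCost_sub_dampedShift_le {f : Euc n → ℝ} {m : ℝ} (hsc : IsSemiconcave (m ^ 2) f)
    {x h : Euc n} {α : ℝ → Euc n} {s : ℝ} (hs : 0 ≤ s) (hα : IntegrableOn α (Ioc 0 s)) :
    fCost f (x + h) (α - dampedShift m h) s + fCost f (x - h) (α - dampedShift m (-h)) s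
      ≤ 2 * fCost f x α s + m * ‖h‖ ^ 2 * (2 * m * exp (-(2 * m * s))) := by
  have htraj_add := traj_add_sub_dampedShift (x := x) (h := h) (m := m) hs hα
  have htraj_sub := traj_add_sub_dampedShift (x := x) (h := -h) (m := m) hs hα
  rw [← sub_eq_add_neg, smul_neg, ← sub_eq_add_neg] at htraj_sub
  have hshift_neg : dampedShift m (-h) s = -dampedShift m h s := smul_neg _ _
  have hparallelogram : ‖α s - dampedShift m h s‖ ^ 2 + ‖α s + dampedShift m h s‖ ^ 2
      = 2 * ‖α s‖ ^ 2 + 2 * (m ^ 2 * exp (-(2 * m * s)) * ‖h‖ ^ 2) := by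
    rw [norm_sub_sq_real, norm_add_sq_real, norm_dampedShift_sq]
    ring
  have hf := hsc (traj x α s) (exp (-(m * s)) • h)
  rw [norm_smul, Real.norm_of_nonneg (exp_pos _).le, mul_pow, exp_neg_mul_sq] at hf
  simp only [fCost, Pi.sub_apply, htraj_add, htraj_sub, hshift_neg, sub_neg_eq_add]
  linarith

lemma memLp_two_of_integrableOn_fCost {f : Euc n → ℝ} {flo : ℝ} (hlo : ∀ x, flo ≤ f x)
    {x : Euc n} {α : ℝ → Euc n} {t : ℝ} (hα : Measurable α)
    (hcost : IntegrableOn (fCost f x α) (Ioc 0 t)) :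
    MemLp α 2 (volume.restrict (Ioc 0 t)) := by
  refine (memLp_two_iff_integrable_sq_norm hα.aestronglyMeasurable).2 <|
    Integrable.mono' ((hcost.sub (integrableOn_const measure_Ioc_lt_top.ne)).const_mul 2)
      (hα.norm.pow_const 2).aestronglyMeasurable (ae_of_all _ fun s => ?_)
  have := hlo (traj x α s)
  simp only [fCost, norm_pow, norm_norm, Pi.sub_apply]
  linarith

lemma continuousOn_traj (x : Euc n) {α : ℝ → Euc n} {t : ℝ} (hα : IntegrableOn α (Ioc 0 t)) :
    ContinuousOn (traj x α) (Icc 0 t) :=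
  continuousOn_const.add <|
    intervalIntegral.continuousOn_primitive
      ((integrableOn_Icc_iff_integrableOn_Ioc enorm_ne_top).2 hα)

lemma integrableOn_fCost {f : Euc n → ℝ} (hf : Continuous f) (x : Euc n) {α : ℝ → Euc n}
    {t : ℝ} (hα : MemLp α 2 (volume.restrict (Ioc 0 t))) :
    IntegrableOn (fCost f x α) (Ioc 0 t) :=
  ((hα.integrable_norm_pow two_ne_zero).const_mul (1 / 2)).add <|
    (hf.comp_continuousOn (continuousOn_traj x (hα.integrable one_le_two))).integrableOn_Icc
      |>.mono_set Ioc_subset_Icc_self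

lemma uT_le_integral_fCost {f : Euc n → ℝ} {flo : ℝ} (hlo : ∀ x, flo ≤ f x) {t : ℝ}
    (ht : 0 ≤ t) {x : Euc n} {α : ℝ → Euc n} (hα : Measurable α)
    (hcost : IntegrableOn (fCost f x α) (Ioc 0 t)) :
    uT f x t ≤ ∫ s in Ioc 0 t, fCost f x α s := by
  unfold uT
  refine csInf_le ⟨flo * t, ?_⟩ ⟨α, hα, hcost, rfl⟩
  rintro _ ⟨β, -, hβ, rfl⟩
  calc flo * t = ∫ _ in Ioc 0 t, flo := by
        rw [setIntegral_const, Real.volume_real_Ioc_of_le ht, smul_eq_mul, sub_zero, mul_comm]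
    _ ≤ ∫ s in Ioc 0 t, fCost f x β s :=
        setIntegral_mono_on (integrableOn_const measure_Ioc_lt_top.ne) hβ measurableSet_Ioc
          fun s _ => by unfold fCost; nlinarith [hlo (traj x β s), sq_nonneg ‖β s‖]

lemma exists_integral_fCost_lt_uT_add (f : Euc n → ℝ) (x : Euc n) (t : ℝ) {ε : ℝ} (hε : 0 < ε) :
    ∃ α : ℝ → Euc n, Measurable α ∧ IntegrableOn (fCost f x α) (Ioc 0 t) ∧
      ∫ s in Ioc 0 t, fCost f x α s < uT f x t + ε := by
  have hconst : IntegrableOn (fCost f x 0) (Ioc 0 t) := by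
    have : fCost f x 0 = fun _ => f x := by
      funext s
      simp [fCost, traj]
    rw [this]
    exact integrableOn_const measure_Ioc_lt_top.ne
  have hne : {c : ℝ | ∃ α : ℝ → Euc n, Measurable α ∧ IntegrableOn (fCost f x α) (Ioc 0 t) ∧
      c = ∫ s in Ioc 0 t, fCost f x α s}.Nonempty := ⟨_, 0, measurable_const, hconst, rfl⟩
  obtain ⟨_, ⟨α, hα, hcost, rfl⟩, hlt⟩ := Real.lt_sInf_add_pos hne hε
  exact ⟨α, hα, hcost, hlt⟩

lemma integral_fCost_add_integral_fCost_sub_le {f : Euc n → ℝ} {m t : ℝ}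
    (hsc : IsSemiconcave (m ^ 2) f) (hm : 0 ≤ m) (ht : 0 ≤ t) {x h : Euc n} {α : ℝ → Euc n}
    (hα : IntegrableOn α (Ioc 0 t)) (hcost : IntegrableOn (fCost f x α) (Ioc 0 t))
    (hcost_add : IntegrableOn (fCost f (x + h) (α - dampedShift m h)) (Ioc 0 t))
    (hcost_sub : IntegrableOn (fCost f (x - h) (α - dampedShift m (-h))) (Ioc 0 t)) :
    (∫ s in Ioc 0 t, fCost f (x + h) (α - dampedShift m h) s)
        + ∫ s in Ioc 0 t, fCost f (x - h) (α - dampedShift m (-h)) s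
      ≤ 2 * (∫ s in Ioc 0 t, fCost f x α s) + m * ‖h‖ ^ 2 := by
  have hexp : IntegrableOn (fun s => 2 * m * exp (-(2 * m * s))) (Ioc 0 t) :=
    (by fun_prop : Continuous fun s => 2 * m * exp (-(2 * m * s))).integrableOn_Ioc
  have hdecay : m * ‖h‖ ^ 2 * (1 - exp (-(2 * m * t))) ≤ m * ‖h‖ ^ 2 :=
    mul_le_of_le_one_right (by positivity) (sub_le_self 1 (exp_pos _).le)
  rw [← integral_add hcost_add hcost_sub]
  calc _ ≤ ∫ s in Ioc 0 t, (2 * fCost f x α s + m * ‖h‖ ^ 2 * (2 * m * exp (-(2 * m * s)))) :=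
        setIntegral_mono_on (hcost_add.add hcost_sub)
          ((hcost.const_mul 2).fun_add (hexp.const_mul _)) measurableSet_Ioc fun s hs =>
            fCost_add_fCost_sub_dampedShift_le hsc hs.1.le
              (hα.mono_set (Ioc_subset_Ioc_right hs.2))
    _ = 2 * (∫ s in Ioc 0 t, fCost f x α s) + m * ‖h‖ ^ 2 * (1 - exp (-(2 * m * t))) := by
        rw [integral_add (hcost.const_mul 2) (hexp.const_mul _), integral_const_mul,
          integral_const_mul, integral_Ioc_mul_exp_neg_mul _ ht]
    _ ≤ _ := by linarith

theorem isSemiconcave_uT {f : Euc n → ℝ} {flo C t : ℝ} (hf : Continuous f)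
    (hlo : ∀ x, flo ≤ f x) (hsc : IsSemiconcave C f) (hC : 0 ≤ C) (ht : 0 ≤ t) :
    IsSemiconcave (√C) (fun x => uT f x t) := by
  intro x h
  rw [← sq_sqrt hC] at hsc
  refine le_of_forall_pos_le_add fun ε hε => ?_
  obtain ⟨α, hα, hcost, hlt⟩ := exists_integral_fCost_lt_uT_add f x t (half_pos hε)
  have hα₂ := memLp_two_of_integrableOn_fCost hlo hα hcost
  have hshift (y v : Euc n) : Measurable (α - dampedShift (√C) v) ∧
      IntegrableOn (fCost f y (α - dampedShift (√C) v)) (Ioc 0 t) :=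
    ⟨hα.sub (continuous_dampedShift _ v).measurable,
      integrableOn_fCost hf y (hα₂.sub (memLp_dampedShift _ v t))⟩
  have hu_add := uT_le_integral_fCost hlo ht (hshift (x + h) h).1 (hshift (x + h) h).2
  have hu_sub := uT_le_integral_fCost hlo ht (hshift (x - h) (-h)).1 (hshift (x - h) (-h)).2
  have := integral_fCost_add_integral_fCost_sub_le hsc (sqrt_nonneg C) ht
    (hα₂.integrable one_le_two) hcost (hshift _ h).2 (hshift _ (-h)).2
  dsimp only
  linarith

theorem stmt6_general {n : ℕ} (f : Euc n → ℝ) (flo C1 C2 : ℝ)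
    (hcont : Continuous f) (hlo : ∀ x, flo ≤ f x)
    (hlip : ∀ x y : Euc n, |f x - f y| ≤ C1 * dist x y)
    (hsc : ∀ x h : Euc n, f (x + h) + f (x - h) - 2 * f x ≤ C2 * ‖h‖ ^ 2)
    (t : ℝ) (ht : 0 ≤ t) :
    ∀ x h : Euc n, uT f (x + h) t + uT f (x - h) t - 2 * uT f x t
      ≤ Real.sqrt (C1 + C2) * ‖h‖ ^ 2 := by
  intro x h
  have hsc' : IsSemiconcave (max C2 0) f := IsSemiconcave.mono hsc (le_max_left _ _)
  refine (isSemiconcave_uT hcont hlo hsc' (le_max_right _ _) ht x h).trans ?_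
  rcases eq_or_ne h 0 with rfl | hh
  · simp
  have hC1 : 0 ≤ C1 := by
    have := (abs_nonneg _).trans (hlip (x + h) x)
    rw [dist_self_add_left] at this
    exact nonneg_of_mul_nonneg_left this (norm_pos_iff.2 hh)
  refine mul_le_mul_of_nonneg_right ?_ (sq_nonneg _)
  rcases le_total C2 0 with hC2 | hC2
  · rw [max_eq_right hC2, sqrt_zero]
    exact sqrt_nonneg _
  · rw [max_eq_left hC2]
    exact sqrt_le_sqrt (by linarith)

/-- under assumptions (A) and (B), for every `t ≥ 0` the map `x ↦ u(x,t)`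
is semiconcave with constant `√(C₁+C₂)`, independent of `t`. -/
theorem stmt6 {n : ℕ} (f : Euc n → ℝ) (flo fhi C1 C2 : ℝ)
    (hcont : Continuous f) (hlo : ∀ x, flo ≤ f x) (hhi : ∀ x, f x ≤ fhi)
    (hattain : ∃ x, f x = flo)
    (hlip : ∀ x y : Euc n, |f x - f y| ≤ C1 * dist x y)
    (hsc : ∀ x h : Euc n, f (x + h) + f (x - h) - 2 * f x ≤ C2 * ‖h‖ ^ 2)
    (t : ℝ) (ht : 0 ≤ t) :
    ∀ x h : Euc n, uT f (x + h) t + uT f (x - h) t - 2 * uT f x t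
      ≤ Real.sqrt (C1 + C2) * ‖h‖ ^ 2 :=
  stmt6_general f flo C1 C2 hcont hlo hlip hsc t ht
end

section
/- Assume (A). Then u(x̄,t) = f̲ · t for every x̄ ∈ 𝔐 and t ≥ 0, and for all x ∈ ℝⁿ and t > 0 one has |u(x,t)/t − f̲| ≤ √(4‖f‖∞) · dist(x,𝔐) / t; consequently u(x,t)/t → f̲ locally uniformly on ℝⁿ as t → +∞. -/
open MeasureTheory Filter Metric Set Topology

/-!
Every admissible cost on `[0, t]` is at least `f̲ t` because `f ≥ f̲`, and the zero control at a
point of `𝔐` attains it. From an arbitrary `x`, steer in time `τ` along the segment to a nearest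
point `x̄ ∈ 𝔐` and rest there: with `d = |x̄ - x|` the excess cost over `f̲ t` is at most
`d² / (2τ) + 2‖f‖∞ τ` (for `τ > t` the zero control already does this well). Minimizing over
`τ > 0` gives `√(4‖f‖∞) d`, and since `dist(·, 𝔐)` is continuous the resulting `O(1/t)` bound is
locally uniform.
-/

variable {n : ℕ}

theorem abs_le_supNorm_s7 {f : Euc n → ℝ} {m M : ℝ} (hm : ∀ z, m ≤ f z) (hM : ∀ z, f z ≤ M)
    (z : Euc n) : |f z| ≤ supNorm f :=
  le_ciSup ⟨max |m| |M|, forall_mem_range.2 fun y => abs_le_max_abs_abs (hm y) (hM y)⟩ z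

theorem setIntegral_Ioc_const {a b : ℝ} (hab : a ≤ b) (c : ℝ) :
    ∫ _ in Ioc a b, c = c * (b - a) := by
  rw [setIntegral_const, Real.volume_real_Ioc_of_le hab, smul_eq_mul, mul_comm]

theorem le_mul_of_forall_le_sq_div_add_sq_mul {c d k : ℝ} (hd : 0 ≤ d) (hk : 0 ≤ k)
    (h : ∀ τ > 0, c ≤ d ^ 2 / (2 * τ) + k ^ 2 * τ / 2) : c ≤ k * d := by
  -- `τ = d / k` is optimal; shifting both by `ε` keeps `τ` positive when `d` or `k` vanishes.
  have hε : ∀ ε > 0, c ≤ (k + ε) * (d + ε) := by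
    intro ε hε
    have hdε : 0 < d + ε := by positivity
    have hkε : 0 < k + ε := by positivity
    calc c ≤ d ^ 2 / (2 * ((d + ε) / (k + ε))) + k ^ 2 * ((d + ε) / (k + ε)) / 2 :=
          h _ (div_pos hdε hkε)
      _ ≤ (d + ε) ^ 2 / (2 * ((d + ε) / (k + ε))) + (k + ε) ^ 2 * ((d + ε) / (k + ε)) / 2 := by
          gcongr <;> linarith
      _ = (k + ε) * (d + ε) := by field_simp; ring
  have hlim : Tendsto (fun ε => (k + ε) * (d + ε)) (𝓝[>] 0) (𝓝 (k * d)) := by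
    have hcont : Continuous fun ε : ℝ => (k + ε) * (d + ε) := by fun_prop
    simpa using (hcont.tendsto 0).mono_left nhdsWithin_le_nhds
  exact ge_of_tendsto hlim (eventually_nhdsWithin_of_forall hε)

theorem tendstoLocallyUniformly_of_abs_sub_le_div {X : Type*} [TopologicalSpace X]
    {F : ℝ → X → ℝ} {g : X → ℝ} {c : ℝ} (hg : Continuous g)
    (hF : ∀ x, ∀ t > 0, |F t x - c| ≤ g x / t) :
    TendstoLocallyUniformly F (fun _ => c) atTop := by
  rw [Metric.tendstoLocallyUniformly_iff]
  intro ε hε x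
  refine ⟨{y | g y < g x + 1}, (isOpen_lt hg continuous_const).mem_nhds (lt_add_one (g x)), ?_⟩
  filter_upwards [eventually_gt_atTop 0, eventually_gt_atTop ((g x + 1) / ε)]
    with t ht htε y (hy : g y < g x + 1)
  rw [div_lt_iff₀ hε] at htε
  rw [dist_comm, Real.dist_eq]
  calc |F t y - c| ≤ g y / t := hF y t ht
    _ < ε := by rw [div_lt_iff₀ ht]; linarith

section ControlProblem

variable {f : Euc n → ℝ} {x : Euc n} {t m : ℝ}

def admissibleCosts (f : Euc n → ℝ) (x : Euc n) (t : ℝ) : Set ℝ :=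
  {c | ∃ α : ℝ → Euc n, Measurable α ∧ IntegrableOn (fCost f x α) (Ioc 0 t) ∧
    c = ∫ s in Ioc 0 t, fCost f x α s}

theorem uT_eq_sInf_admissibleCosts : uT f x t = sInf (admissibleCosts f x t) := rfl

theorem integral_fCost_mem_admissibleCosts {α : ℝ → Euc n} (hα : Measurable α)
    (hint : IntegrableOn (fCost f x α) (Ioc 0 t)) :
    ∫ s in Ioc 0 t, fCost f x α s ∈ admissibleCosts f x t :=
  ⟨α, hα, hint, rfl⟩

theorem fCost_zero : fCost f x 0 = fun _ => f x := by
  ext s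
  simp [fCost, traj]

theorem mul_self_mem_admissibleCosts (ht : 0 ≤ t) : f x * t ∈ admissibleCosts f x t := by
  have hmem := integral_fCost_mem_admissibleCosts (f := f) (x := x) (t := t) measurable_zero
    (by rw [fCost_zero]; exact integrableOn_const measure_Ioc_lt_top.ne)
  rwa [fCost_zero, setIntegral_Ioc_const ht, sub_zero] at hmem

theorem mul_le_of_mem_admissibleCosts (hm : ∀ z, m ≤ f z) (ht : 0 ≤ t) {c : ℝ}
    (hc : c ∈ admissibleCosts f x t) : m * t ≤ c := by
  obtain ⟨α, -, hint, rfl⟩ := hc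
  calc m * t = ∫ _ in Ioc 0 t, m := by rw [setIntegral_Ioc_const ht, sub_zero]
    _ ≤ ∫ s in Ioc 0 t, fCost f x α s :=
      setIntegral_mono_on (integrableOn_const measure_Ioc_lt_top.ne) hint measurableSet_Ioc
        fun s _ => by unfold fCost; nlinarith [hm (traj x α s), sq_nonneg ‖α s‖]

theorem mul_le_uT (hm : ∀ z, m ≤ f z) (ht : 0 ≤ t) : m * t ≤ uT f x t := by
  rw [uT_eq_sInf_admissibleCosts]
  exact le_csInf ⟨_, mul_self_mem_admissibleCosts ht⟩ fun _ => mul_le_of_mem_admissibleCosts hm ht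

theorem uT_le_of_mem_admissibleCosts (hm : ∀ z, m ≤ f z) (ht : 0 ≤ t) {c : ℝ}
    (hc : c ∈ admissibleCosts f x t) : uT f x t ≤ c := by
  rw [uT_eq_sInf_admissibleCosts]
  exact csInf_le ⟨m * t, fun _ => mul_le_of_mem_admissibleCosts hm ht⟩ hc

theorem uT_le_mul_self (hm : ∀ z, m ≤ f z) (ht : 0 ≤ t) : uT f x t ≤ f x * t :=
  uT_le_of_mem_admissibleCosts hm ht (mul_self_mem_admissibleCosts ht)

theorem uT_eq_mul_of_eq (hm : ∀ z, m ≤ f z) (hx : f x = m) (ht : 0 ≤ t) : uT f x t = m * t :=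
  (hx ▸ uT_le_mul_self hm ht).antisymm (mul_le_uT hm ht)

end ControlProblem

section StraightControl

variable {f : Euc n → ℝ} {x : Euc n} {t m M τ s : ℝ} (v : Euc n)

noncomputable def straightControl (τ : ℝ) (v : Euc n) : ℝ → Euc n :=
  (Iic τ).indicator fun _ => τ⁻¹ • v

theorem measurable_straightControl : Measurable (straightControl τ v) :=
  measurable_const.indicator measurableSet_Iic

theorem traj_straightControl (hτ : 0 < τ) (hs : 0 ≤ s) :
    traj x (straightControl τ v) s = x + (min s τ / τ) • v := by
  rw [traj, straightControl, setIntegral_indicator measurableSet_Iic, Ioc_inter_Iic,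
    setIntegral_const, Real.volume_real_Ioc_of_le (le_min hs hτ.le), sub_zero, smul_smul,
    div_eq_mul_inv]

theorem fCost_straightControl_of_le (hτ : 0 < τ) (hs : 0 ≤ s) (hsτ : s ≤ τ) :
    fCost f x (straightControl τ v) s = ‖v‖ ^ 2 / (2 * τ ^ 2) + f (x + (s / τ) • v) := by
  rw [fCost, traj_straightControl v hτ hs, min_eq_left hsτ, straightControl,
    indicator_of_mem (mem_Iic.2 hsτ), norm_smul, norm_inv, Real.norm_of_nonneg hτ.le]
  field_simp

theorem fCost_straightControl_of_lt (hτ : 0 < τ) (hsτ : τ < s) :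
    fCost f x (straightControl τ v) s = f (x + v) := by
  rw [fCost, traj_straightControl v hτ (hτ.trans hsτ).le, min_eq_right hsτ.le, div_self hτ.ne',
    one_smul, straightControl, indicator_of_notMem (notMem_Iic.2 hsτ)]
  simp

theorem integrableOn_fCost_straightControl (hf : Continuous f) (hτ : 0 < τ) (hτt : τ ≤ t) :
    IntegrableOn (fCost f x (straightControl τ v)) (Ioc 0 t) := by
  rw [← Ioc_union_Ioc_eq_Ioc hτ.le hτt]
  refine IntegrableOn.union ?_ ?_
  · have hcont : ContinuousOn
        (fun s => ‖v‖ ^ 2 / (2 * τ ^ 2) + f (x + (s / τ) • v)) (Icc 0 τ) := by fun_prop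
    exact (hcont.integrableOn_Icc.mono_set Ioc_subset_Icc_self).congr_fun
      (fun s hs => (fCost_straightControl_of_le v hτ hs.1.le hs.2).symm) measurableSet_Ioc
  · exact (integrableOn_const (C := f (x + v)) measure_Ioc_lt_top.ne).congr_fun
      (fun s hs => (fCost_straightControl_of_lt v hτ hs.1).symm) measurableSet_Ioc

theorem uT_le_of_straightControl (hf : Continuous f) (hm : ∀ z, m ≤ f z) (hM : ∀ z, f z ≤ M)
    (hτ : 0 < τ) (hτt : τ ≤ t) :
    uT f x t ≤ ‖v‖ ^ 2 / (2 * τ) + M * τ + f (x + v) * (t - τ) := by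
  have hint := integrableOn_fCost_straightControl (x := x) v hf hτ hτt
  refine (uT_le_of_mem_admissibleCosts hm (hτ.le.trans hτt)
    (integral_fCost_mem_admissibleCosts (measurable_straightControl v) hint)).trans ?_
  rw [← Ioc_union_Ioc_eq_Ioc hτ.le hτt] at hint ⊢
  rw [setIntegral_union (Ioc_disjoint_Ioc_of_le le_rfl) measurableSet_Ioc
    (hint.mono_set subset_union_left) (hint.mono_set subset_union_right)]
  have hmove : ∫ s in Ioc 0 τ, fCost f x (straightControl τ v) s ≤ ‖v‖ ^ 2 / (2 * τ) + M * τ :=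
    calc ∫ s in Ioc 0 τ, fCost f x (straightControl τ v) s
        ≤ ∫ _ in Ioc 0 τ, (‖v‖ ^ 2 / (2 * τ ^ 2) + M) :=
          setIntegral_mono_on (hint.mono_set subset_union_left)
            (integrableOn_const measure_Ioc_lt_top.ne) measurableSet_Ioc fun s hs => by
              rw [fCost_straightControl_of_le v hτ hs.1.le hs.2]
              exact add_le_add_right (hM _) _
      _ = ‖v‖ ^ 2 / (2 * τ) + M * τ := by
          rw [setIntegral_Ioc_const hτ.le, sub_zero]
          field_simp
  have hrest : ∫ s in Ioc τ t, fCost f x (straightControl τ v) s = f (x + v) * (t - τ) := by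
    rw [setIntegral_congr_fun measurableSet_Ioc fun s hs => fCost_straightControl_of_lt v hτ hs.1,
      setIntegral_Ioc_const hτt]
  linarith

end StraightControl

section Estimate

variable {f : Euc n → ℝ} {x xb : Euc n} {t m M : ℝ}

theorem uT_sub_mul_le (hf : Continuous f) (hm : ∀ z, m ≤ f z) (hM : ∀ z, f z ≤ M)
    (hxb : f xb = m) (ht : 0 < t) {τ : ℝ} (hτ : 0 < τ) :
    uT f x t - m * t ≤ ‖xb - x‖ ^ 2 / (2 * τ) + (M - m) * τ := by
  rcases le_or_gt τ t with hτt | htτ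
  · have hstraight := uT_le_of_straightControl (x := x) (xb - x) hf hm hM hτ hτt
    rw [add_sub_cancel, hxb] at hstraight
    linarith
  · have hconst := uT_le_mul_self (x := x) hm ht.le
    have hshort : (f x - m) * t ≤ (M - m) * τ :=
      mul_le_mul (by linarith [hM x]) htτ.le ht.le (by linarith [hm x, hM x])
    have hkin : 0 ≤ ‖xb - x‖ ^ 2 / (2 * τ) := by positivity
    linarith

theorem uT_sub_mul_le_sqrt_mul (hf : Continuous f) (hm : ∀ z, m ≤ f z) (hM : ∀ z, f z ≤ M)
    (hxb : f xb = m) (ht : 0 < t) :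
    uT f x t - m * t ≤ √(2 * (M - m)) * ‖xb - x‖ := by
  have hMm : 0 ≤ M - m := by linarith [hm x, hM x]
  refine le_mul_of_forall_le_sq_div_add_sq_mul (norm_nonneg _) (Real.sqrt_nonneg _)
    fun τ hτ => ?_
  rw [Real.sq_sqrt (by positivity)]
  convert uT_sub_mul_le hf hm hM hxb ht hτ using 2
  ring

theorem abs_uT_div_sub_le (hf : Continuous f) (hm : ∀ z, m ≤ f z) (hM : ∀ z, f z ≤ M)
    (hne : ∃ z, f z = m) (ht : 0 < t) :
    |uT f x t / t - m| ≤ √(4 * supNorm f) * infDist x {z | f z = m} / t := by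
  have hsup := abs_le_supNorm_s7 hm hM
  obtain ⟨xb, hxb, hdist⟩ := (isClosed_eq hf continuous_const).exists_infDist_eq_dist hne x
  have hlow : m * t ≤ uT f x t := mul_le_uT hm ht.le
  have hup := uT_sub_mul_le_sqrt_mul (x := x) hf hm (fun z => (le_abs_self _).trans (hsup z))
    hxb ht
  have hsqrt : √(2 * (supNorm f - m)) ≤ √(4 * supNorm f) := by
    refine Real.sqrt_le_sqrt ?_
    linarith [neg_abs_le (f xb), hsup xb, show f xb = m from hxb]
  have hdiv : uT f x t / t - m = (uT f x t - m * t) / t := by field_simp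
  rw [hdiv, abs_of_nonneg (div_nonneg (sub_nonneg.2 hlow) ht.le), hdist, dist_eq_norm']
  gcongr
  exact hup.trans (mul_le_mul_of_nonneg_right hsqrt (norm_nonneg _))

end Estimate

/-- under assumptions (A), `u(x̄,t) = flo·t` on the argmin set,
`|u(x,t)/t - flo| ≤ √(4‖f‖∞) dist(x,𝔐)/t` for `t > 0`, and `u(·,t)/t → flo`
locally uniformly as `t → +∞`. -/
theorem stmt7 {n : ℕ} (f : Euc n → ℝ) (flo fhi : ℝ)
    (hcont : Continuous f) (hlo : ∀ x, flo ≤ f x) (hhi : ∀ x, f x ≤ fhi)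
    (hattain : ∃ x, f x = flo) :
    (∀ x ∈ {z : Euc n | f z = flo}, ∀ t : ℝ, 0 ≤ t → uT f x t = flo * t) ∧
    (∀ x : Euc n, ∀ t : ℝ, 0 < t →
      |uT f x t / t - flo| ≤
        Real.sqrt (4 * supNorm f) * Metric.infDist x {z : Euc n | f z = flo} / t) ∧
    TendstoLocallyUniformly (fun (t : ℝ) (x : Euc n) => uT f x t / t)
      (fun _ => flo) atTop := by
  have hrate : ∀ x : Euc n, ∀ t : ℝ, 0 < t →
      |uT f x t / t - flo| ≤ √(4 * supNorm f) * infDist x {z | f z = flo} / t :=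
    fun _ _ ht => abs_uT_div_sub_le hcont hlo hhi hattain ht
  refine ⟨fun x hx t ht => uT_eq_mul_of_eq hlo hx ht, hrate, ?_⟩
  exact tendstoLocallyUniformly_of_abs_sub_le_div
    (continuous_const.mul (continuous_infDist_pt _)) hrate
end

section
/- Under assumption (F), for every x ∈ ℝⁿ there exists an optimal control: a measurable α* : [0,∞) → ℝⁿ with |α*(s)| ≤ 1 a.e. such that ∫₀^{t_x(α*)} ℓ(y_x^{α*}(s)) ds = v(x), i.e. the infimum defining v(x) is attained. -/
open MeasureTheory Filter Metric Set Topology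
open scoped ENNReal

noncomputable section

variable {n : ℕ}

/-- An admissible control: measurable with `‖α s‖ ≤ 1` for a.e. `s ≥ 0`. -/
def Admissible (α : ℝ → Euc n) : Prop :=
  Measurable α ∧ ∀ᵐ s ∂(volume : Measure ℝ), 0 ≤ s → ‖α s‖ ≤ 1

/-- Hitting time `t_x(α) = inf {s ≥ 0 : y_x^α(s) ∈ M}` (`∞` if the set is empty). -/
def hitTime (M : Set (Euc n)) (x : Euc n) (α : ℝ → Euc n) : ℝ≥0∞ :=
  ⨅ (s : ℝ) (_ : 0 ≤ s) (_ : traj x α s ∈ M), ENNReal.ofReal s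

/-- Cost `∫₀^{t_x(α)} ℓ(y_x^α(s)) ds` of a control (as an extended real, `ℓ ≥ 0`). -/
def cost (M : Set (Euc n)) (l : Euc n → ℝ) (x : Euc n) (α : ℝ → Euc n) : ℝ≥0∞ :=
  ∫⁻ s in {s : ℝ | 0 < s ∧ ENNReal.ofReal s < hitTime M x α},
    ENNReal.ofReal (l (traj x α s))

/-- The value function (extended-real valued). -/
def valE (M : Set (Euc n)) (l : Euc n → ℝ) (x : Euc n) : ℝ≥0∞ :=
  ⨅ (α : ℝ → Euc n) (_ : Admissible α), cost M l x α

/-- The value function `v`. -/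
def val (M : Set (Euc n)) (l : Euc n → ℝ) (x : Euc n) : ℝ := (valE M l x).toReal

/-- A control is optimal for `x` if it is admissible and attains the infimum. -/
def IsOptimal (M : Set (Euc n)) (l : Euc n → ℝ) (x : Euc n) (α : ℝ → Euc n) : Prop :=
  Admissible α ∧ cost M l x α = valE M l x

/-- The viscosity subdifferential `D⁻v(z)`. -/
def subDiff (v : Euc n → ℝ) (z : Euc n) : Set (Euc n) :=
  {p | ∀ ε > 0, ∀ᶠ x in 𝓝 z, v z + (inner ℝ p (x - z) : ℝ) - ε * ‖x - z‖ ≤ v x}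

/-- The viscosity superdifferential `D⁺v(z)`. -/
def superDiff (v : Euc n → ℝ) (z : Euc n) : Set (Euc n) :=
  {p | ∀ ε > 0, ∀ᶠ x in 𝓝 z, v x ≤ v z + (inner ℝ p (x - z) : ℝ) + ε * ‖x - z‖}

/-- The set of limiting gradients `D*v(z)`. -/
def limGrad (v : Euc n → ℝ) (z : Euc n) : Set (Euc n) :=
  {p | ∃ u : ℕ → Euc n, (∀ k, DifferentiableAt ℝ v (u k)) ∧
    Tendsto u atTop (𝓝 z) ∧ Tendsto (fun k => gradient v (u k)) atTop (𝓝 p)}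

/-- Distance of the trajectory to the target, with the trajectory extended so that it
remains in `M` after the hitting time. -/
def extDist (M : Set (Euc n)) (x : Euc n) (α : ℝ → Euc n) (t : ℝ) : ℝ :=
  if ENNReal.ofReal t < hitTime M x α then Metric.infDist (traj x α t) M else 0

end

open scoped NNReal

/-!
Take a minimizing sequence of controls, normalised to have norm at most `1` everywhere. Their
trajectories are `1`-Lipschitz and start at `x`, so by Arzelà–Ascoli a subsequence converges
locally uniformly to a `1`-Lipschitz curve `z`, which is the trajectory of the control `deriv z`
(fundamental theorem of calculus for Lipschitz curves). Staying outside the closed target on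
`[0, s]` is an open condition in the compact-open topology, so the hitting time is lower
semicontinuous under locally uniform convergence; with Fatou's lemma the cost is lower
semicontinuous too, and `deriv z` attains the infimum.
-/

section Lipschitz

variable {E : Type*} [NormedAddCommGroup E] [NormedSpace ℝ E]

theorem lipschitzWith_intervalIntegral {g : ℝ → E} {K : ℝ≥0} (hg : ∀ s, ‖g s‖ ≤ K)
    (hgm : AEStronglyMeasurable g) (a : ℝ) : LipschitzWith K fun t => ∫ s in a..t, g s := by
  have hint : ∀ b c : ℝ, IntervalIntegrable g volume b c := fun b c =>
    intervalIntegrable_const.mono_fun' hgm.restrict (ae_of_all _ hg)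
  refine LipschitzWith.of_dist_le_mul fun t t' => ?_
  rw [dist_eq_norm, intervalIntegral.integral_interval_sub_left (hint a t) (hint a t'),
    Real.dist_eq]
  exact intervalIntegral.norm_integral_le_of_norm_le_const fun s _ => hg s

theorem LipschitzWith.integral_deriv_eq_sub [FiniteDimensional ℝ E] {f : ℝ → E} {K : ℝ≥0}
    (hf : LipschitzWith K f) (a b : ℝ) : ∫ t in a..b, deriv f t = f b - f a := by
  have hbound : ∀ t, ‖deriv f t‖ ≤ K := fun t => norm_deriv_le_of_lipschitz hf
  have hmeas : AEStronglyMeasurable (deriv f) :=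
    (stronglyMeasurable_deriv f).aestronglyMeasurable
  have hint : IntervalIntegrable (deriv f) volume a b :=
    intervalIntegrable_const.mono_fun' hmeas.restrict (ae_of_all _ hbound)
  set G : ℝ → E := fun t => ∫ s in a..t, deriv f s
  have hAC : AbsolutelyContinuousOnInterval (f - G) a b :=
    (hf.sub (lipschitzWith_intervalIntegral hbound hmeas a)).lipschitzOnWith
      |>.absolutelyContinuousOnInterval
  have hderiv : ∀ᵐ t, t ∈ uIcc a b → HasDerivAt (f - G) 0 t := by
    filter_upwards [hf.ae_differentiableAt_real, hint.ae_hasDerivAt_integral] with t hft hGt ht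
    simpa using hft.hasDerivAt.sub (hGt ht a left_mem_uIcc)
  obtain ⟨C, hC⟩ := hAC.const_of_ae_hasDerivAt_zero hderiv
  have ha := hC a left_mem_uIcc
  have hb := hC b right_mem_uIcc
  simp only [Pi.sub_apply, G, intervalIntegral.integral_same, sub_zero] at ha hb
  rw [← ha] at hb
  rw [← hb]
  abel

end Lipschitz

theorem exists_subseq_tendstoLocallyUniformly_of_lipschitzWith {X E : Type*}
    [PseudoMetricSpace X] [ProperSpace X] [MetricSpace E] [ProperSpace E] {K : ℝ≥0}
    {y : ℕ → X → E} (hy : ∀ k, LipschitzWith K (y k)) (x₀ : X) (c : E)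
    (h0 : ∀ k, y k x₀ = c) :
    ∃ φ : ℕ → ℕ, StrictMono φ ∧ ∃ z : X → E, LipschitzWith K z ∧
      TendstoLocallyUniformly (fun k => y (φ k)) z atTop := by
  set S : Set C(X, E) := {f | LipschitzWith K f ∧ f x₀ = c}
  have hpointwise : IsCompact (ContinuousMap.toFun '' S) := by
    have himage : ContinuousMap.toFun '' S = {g : X → E | LipschitzWith K g ∧ g x₀ = c} := by
      ext g
      exact ⟨by rintro ⟨f, hf, rfl⟩; exact hf, fun hg => ⟨⟨g, hg.1.continuous⟩, hg, rfl⟩⟩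
    rw [himage]
    refine (isCompact_univ_pi fun t => isCompact_closedBall c (K * dist t x₀)).of_isClosed_subset
      ((isClosed_setOfPred_lipschitzWith K).inter
        (isClosed_eq (continuous_apply x₀) continuous_const)) ?_
    rintro g ⟨hg, hg0⟩ t -
    rw [mem_closedBall, ← hg0]
    exact hg.dist_le_mul t x₀
  have hS : IsCompact S := ArzelaAscoli.isCompact_of_equicontinuous S hpointwise
    (LipschitzWith.uniformEquicontinuous _ K fun f => f.2.1).equicontinuous
  obtain ⟨z, hzS, φ, hφ, hlim⟩ :=
    hS.isSeqCompact (x := fun k => ⟨y k, (hy k).continuous⟩) fun k => ⟨hy k, h0 k⟩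
  exact ⟨φ, hφ, z, hzS.1, ContinuousMap.tendsto_iff_tendstoLocallyUniformly.1 hlim⟩

section Target

variable {E : Type*} [TopologicalSpace E] {M : Set E}

noncomputable def firstHitTime (M : Set E) (f : ℝ → E) : ℝ≥0∞ :=
  ⨅ (s : ℝ) (_ : 0 ≤ s) (_ : f s ∈ M), ENNReal.ofReal s

noncomputable def costUntilHit (M : Set E) (l : E → ℝ) (f : ℝ → E) : ℝ≥0∞ :=
  ∫⁻ s in {s : ℝ | 0 < s ∧ ENNReal.ofReal s < firstHitTime M f}, ENNReal.ofReal (l (f s))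

theorem ofReal_lt_firstHitTime_iff (hM : IsClosed M) {f : ℝ → E} (hf : Continuous f) {s : ℝ}
    (hs : 0 ≤ s) : ENNReal.ofReal s < firstHitTime M f ↔ MapsTo f (Icc 0 s) Mᶜ := by
  constructor
  · rintro h t ⟨ht0, hts⟩ hft
    have : firstHitTime M f ≤ ENNReal.ofReal t := iInf₂_le_of_le t ht0 (iInf_le _ hft)
    exact (h.trans_le (this.trans (ENNReal.ofReal_le_ofReal hts))).false
  · intro h
    set H := {t : ℝ | 0 ≤ t ∧ f t ∈ M}
    rcases H.eq_empty_or_nonempty with hH | hH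
    · have : firstHitTime M f = ⊤ := by
        simp only [firstHitTime, iInf_eq_top]
        exact fun t ht hft => (hH.subset ⟨ht, hft⟩).elim
      simp [this]
    have hbdd : BddBelow H := ⟨0, fun t ht => ht.1⟩
    have hmin : sInf H ∈ H :=
      ((isClosed_Ici.preimage continuous_id).inter (hM.preimage hf)).csInf_mem hH hbdd
    have hlt : s < sInf H := not_le.1 fun hle => h ⟨hmin.1, hle⟩ hmin.2
    calc ENNReal.ofReal s < ENNReal.ofReal (sInf H) :=
          (ENNReal.ofReal_lt_ofReal_iff_of_nonneg hs).2 hlt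
      _ ≤ firstHitTime M f := le_iInf₂ fun t ht => le_iInf fun hft =>
          ENNReal.ofReal_le_ofReal (csInf_le hbdd ⟨ht, hft⟩)

theorem ContinuousMap.lowerSemicontinuous_firstHitTime (hM : IsClosed M) :
    LowerSemicontinuous fun f : C(ℝ, E) => firstHitTime M f := by
  intro f a ha
  obtain ⟨s, hs, has, hsf⟩ := ENNReal.lt_iff_exists_real_btwn.1 ha
  filter_upwards [ContinuousMap.eventually_mapsTo isCompact_Icc hM.isOpen_compl
    ((ofReal_lt_firstHitTime_iff hM f.continuous hs).1 hsf)] with g hg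
  exact has.trans ((ofReal_lt_firstHitTime_iff hM g.continuous hs).2 hg)

end Target

theorem costUntilHit_le_liminf {E : Type*} [UniformSpace E] {M : Set E} (hM : IsClosed M)
    {l : E → ℝ} (hl : Continuous l) {y : ℕ → ℝ → E} {z : ℝ → E} (hy : ∀ k, Continuous (y k))
    (hz : Continuous z) (hlim : TendstoLocallyUniformly y z atTop) :
    costUntilHit M l z ≤ liminf (fun k => costUntilHit M l (y k)) atTop := by
  set A : (ℝ → E) → Set ℝ := fun f => {s | 0 < s ∧ ENNReal.ofReal s < firstHitTime M f}
  have hA : ∀ f, MeasurableSet (A f) := fun f =>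
    (measurableSet_lt measurable_const measurable_id).inter
      (measurableSet_lt ENNReal.measurable_ofReal measurable_const)
  set F : (ℝ → E) → ℝ → ℝ≥0∞ := fun f => (A f).indicator fun s => ENNReal.ofReal (l (f s))
  have hF : ∀ k, Measurable (F (y k)) := fun k =>
    (ENNReal.measurable_ofReal.comp (hl.comp (hy k)).measurable).indicator (hA _)
  have hFz : ∀ s, F z s ≤ liminf (fun k => F (y k) s) atTop := by
    intro s
    by_cases hs : s ∈ A z
    · have hYZ : Tendsto (fun k => (⟨y k, hy k⟩ : C(ℝ, E))) atTop (𝓝 ⟨z, hz⟩) :=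
        ContinuousMap.tendsto_iff_tendstoLocallyUniformly.2 hlim
      have hev : ∀ᶠ k in atTop, s ∈ A (y k) :=
        (hYZ.eventually (ContinuousMap.lowerSemicontinuous_firstHitTime hM _ _ hs.2)).mono
          fun k hk => ⟨hs.1, hk⟩
      have htend : Tendsto (fun k => ENNReal.ofReal (l (y k s))) atTop
          (𝓝 (ENNReal.ofReal (l (z s)))) :=
        ((ENNReal.continuous_ofReal.comp hl).tendsto _).comp
          (hlim.tendstoLocallyUniformlyOn.tendsto_at (mem_univ s))
      calc F z s = ENNReal.ofReal (l (z s)) := indicator_of_mem hs _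
        _ = liminf (fun k => ENNReal.ofReal (l (y k s))) atTop := htend.liminf_eq.symm
        _ ≤ liminf (fun k => F (y k) s) atTop :=
          liminf_le_liminf <| hev.mono fun k hk =>
            (indicator_of_mem hk fun s => ENNReal.ofReal (l (y k s))).ge
    · simp [F, indicator_of_notMem hs]
  calc costUntilHit M l z = ∫⁻ s, F z s := (lintegral_indicator (hA z) _).symm
    _ ≤ ∫⁻ s, liminf (fun k => F (y k) s) atTop := lintegral_mono hFz
    _ ≤ liminf (fun k => ∫⁻ s, F (y k) s) atTop := lintegral_liminf_le hF
    _ = liminf (fun k => costUntilHit M l (y k)) atTop := by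
      simp only [F, lintegral_indicator (hA _)]
      rfl

section ControlSystem

variable {n : ℕ}

theorem traj_of_nonpos (x : Euc n) (α : ℝ → Euc n) {t : ℝ} (ht : t ≤ 0) : traj x α t = x := by
  simp [traj, Ioc_eq_empty (not_lt.2 ht)]

theorem traj_of_nonneg (x : Euc n) (α : ℝ → Euc n) {t : ℝ} (ht : 0 ≤ t) :
    traj x α t = x + ∫ s in (0 : ℝ)..t, α s := by
  rw [traj, intervalIntegral.integral_of_le ht]

theorem lipschitzWith_traj (x : Euc n) {α : ℝ → Euc n} {K : ℝ≥0}
    (hm : AEStronglyMeasurable α) (hb : ∀ s, ‖α s‖ ≤ K) : LipschitzWith K (traj x α) := by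
  have htraj : ∀ t, traj x α t = x + ∫ s in (0 : ℝ)..max t 0, α s := fun t => by
    rcases le_total t 0 with ht | ht
    · simp [traj_of_nonpos x α ht, max_eq_right ht]
    · rw [traj_of_nonneg x α ht, max_eq_left ht]
  refine LipschitzWith.of_dist_le_mul fun t t' => ?_
  rw [htraj, htraj, dist_add_left]
  simpa using ((lipschitzWith_intervalIntegral hb hm 0).comp
    (LipschitzWith.id.max_const 0)).dist_le_mul t t'

theorem traj_deriv {x : Euc n} {z : ℝ → Euc n} {K : ℝ≥0} (hz : LipschitzWith K z)
    (hx : ∀ t ≤ 0, z t = x) : traj x (deriv z) = z := by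
  funext t
  rcases le_total t 0 with ht | ht
  · rw [traj_of_nonpos _ _ ht, hx t ht]
  · rw [traj_of_nonneg _ _ ht, hz.integral_deriv_eq_sub, hx 0 le_rfl, add_sub_cancel]

theorem LipschitzWith.admissible_deriv {z : ℝ → Euc n} (hz : LipschitzWith 1 z) :
    Admissible (deriv z) :=
  ⟨measurable_deriv z, ae_of_all _ fun _ _ => by simpa using norm_deriv_le_of_lipschitz hz⟩

theorem Admissible.exists_bounded_traj_eq {α : ℝ → Euc n} (hα : Admissible α) (x : Euc n) :
    ∃ β : ℝ → Euc n, Measurable β ∧ (∀ s, ‖β s‖ ≤ 1) ∧ traj x β = traj x α := by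
  refine ⟨fun s => if ‖α s‖ ≤ 1 then α s else 0,
    Measurable.ite (measurableSet_le hα.1.norm measurable_const) hα.1 measurable_const,
    fun s => by dsimp only; split_ifs with h <;> simp [h], ?_⟩
  funext t
  refine congrArg (x + ·) (setIntegral_congr_ae measurableSet_Ioc ?_)
  filter_upwards [hα.2] with s hs hmem
  rw [if_pos (hs hmem.1.le)]

theorem cost_eq_costUntilHit (M : Set (Euc n)) (l : Euc n → ℝ) (x : Euc n) (α : ℝ → Euc n) :
    cost M l x α = costUntilHit M l (traj x α) := rfl

theorem exists_seq_tendsto_valE (M : Set (Euc n)) (l : Euc n → ℝ) (x : Euc n) :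
    ∃ β : ℕ → ℝ → Euc n, (∀ k, Measurable (β k) ∧ ∀ s, ‖β k s‖ ≤ 1) ∧
      Tendsto (fun k => cost M l x (β k)) atTop (𝓝 (valE M l x)) := by
  have hadm : Admissible (fun _ : ℝ => (0 : Euc n)) :=
    ⟨measurable_const, ae_of_all _ fun _ _ => by simp⟩
  obtain ⟨c, -, hc, hcS⟩ := exists_seq_tendsto_sInf (⟨_, _, hadm, rfl⟩ :
    (cost M l x '' {α | Admissible α}).Nonempty) (OrderBot.bddBelow _)
  choose α hα hαc using hcS
  choose β hβm hβb hβα using fun k => (hα k).exists_bounded_traj_eq x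
  refine ⟨β, fun k => ⟨hβm k, hβb k⟩, ?_⟩
  have hβc : ∀ k, cost M l x (β k) = c k := fun k => by
    rw [cost_eq_costUntilHit, hβα, ← cost_eq_costUntilHit, hαc]
  simp only [hβc]
  rwa [sInf_image] at hc

end ControlSystem

theorem stmt9_general {n : ℕ} (M : Set (Euc n)) (l : Euc n → ℝ)
    (hMcl : IsClosed M) (hlc : Continuous l) :
    ∀ x : Euc n, ∃ α : ℝ → Euc n, IsOptimal M l x α := by
  intro x
  obtain ⟨β, hβ, hcost⟩ := exists_seq_tendsto_valE M l x
  have hlip : ∀ k, LipschitzWith 1 (traj x (β k)) := fun k =>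
    lipschitzWith_traj x (hβ k).1.aestronglyMeasurable (by simpa using (hβ k).2)
  obtain ⟨φ, hφ, z, hz, hlim⟩ :=
    exists_subseq_tendstoLocallyUniformly_of_lipschitzWith hlip 0 x fun _ =>
      traj_of_nonpos x _ le_rfl
  have hzx : ∀ t ≤ 0, z t = x := fun t ht =>
    tendsto_nhds_unique (hlim.tendstoLocallyUniformlyOn.tendsto_at (mem_univ t))
      (by simp [traj_of_nonpos _ _ ht])
  refine ⟨deriv z, hz.admissible_deriv, le_antisymm ?_ (iInf₂_le _ hz.admissible_deriv)⟩
  calc cost M l x (deriv z) = costUntilHit M l z := by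
        rw [cost_eq_costUntilHit, traj_deriv hz hzx]
    _ ≤ liminf (fun k => costUntilHit M l (traj x (β (φ k)))) atTop :=
      costUntilHit_le_liminf hMcl hlc (fun k => (hlip _).continuous) hz.continuous hlim
    _ = valE M l x := (hcost.comp hφ.tendsto_atTop).liminf_eq

/-- under assumption (F), for every `x` there exists an optimal control,
i.e. an admissible control attaining the infimum defining the value function. -/
theorem stmt9 {n : ℕ} (M : Set (Euc n)) (l : Euc n → ℝ)
    (hMne : M.Nonempty) (hMcl : IsClosed M)
    (hlc : Continuous l) (hlbd : BddAbove (Set.range l))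
    (hlpos : ∀ z ∉ M, 0 < l z) (hlzero : ∀ z ∈ M, l z = 0) :
    ∀ x : Euc n, ∃ α : ℝ → Euc n, IsOptimal M l x α :=
  stmt9_general M l hMcl hlc
end

section
/- Assume (F) and (H). Then 𝔐 is Lyapunov stable and globally asymptotically stable for optimal trajectories: (i) for every ε > 0 there exists η > 0 such that for every x with dist(x,𝔐) ≤ η and every optimal control α* for x, dist(y_x^{α*}(t),𝔐) ≤ ε for all t ≥ 0; (ii) for every x ∈ ℝⁿ and every optimal control α* for x, dist(y_x^{α*}(t),𝔐) → 0 as t → +∞. -/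
/-!
Going straight to a nearest point of `M` at unit speed shows `v x ≤ C · dist(x, M)` with
`C = sup ℓ`. Trajectories are 1-Lipschitz, so a trajectory at distance `> 2δ` from `M` stays at
distance `> δ` for a time `δ`, where (H) makes it pay at least `γ(δ) δ`. For (i) this exceeds the
cost `v x ≤ C η` of an optimal control once `η` is small; for (ii) it contradicts the finiteness
of `v x` if it happens at arbitrarily large times, since the tail of a finite integral vanishes.
-/

open MeasureTheory Filter Metric Set Topology
open scoped ENNReal

section ValueFunctionStability

variable {n : ℕ}

lemma Admissible.integrableOn_Ioc {α : ℝ → Euc n} (hα : Admissible α) {a b : ℝ}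
    (ha : 0 ≤ a) : IntegrableOn α (Ioc a b) := by
  refine Integrable.mono' (g := fun _ ↦ (1 : ℝ)) ?_ hα.1.aestronglyMeasurable.restrict ?_
  · exact integrableOn_const (by simp)
  · filter_upwards [ae_restrict_of_ae hα.2, ae_restrict_mem measurableSet_Ioc] with s hs hmem
    exact hs (ha.trans hmem.1.le)

@[simp]
lemma traj_zero (x : Euc n) (α : ℝ → Euc n) : traj x α 0 = x := by
  simp [traj]

lemma traj_const (x u : Euc n) {t : ℝ} (ht : 0 ≤ t) : traj x (fun _ ↦ u) t = x + t • u := by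
  simp [traj, measureReal_def, ht]

lemma Admissible.dist_traj_le {α : ℝ → Euc n} (hα : Admissible α) (x : Euc n) {s t : ℝ}
    (hs : 0 ≤ s) (hst : s ≤ t) : dist (traj x α t) (traj x α s) ≤ t - s := by
  have hsplit : traj x α t - traj x α s = ∫ r in Ioc s t, α r := by
    rw [traj, traj, ← Ioc_union_Ioc_eq_Ioc hs hst,
      setIntegral_union (Ioc_disjoint_Ioc_of_le le_rfl) measurableSet_Ioc
        (hα.integrableOn_Ioc le_rfl) (hα.integrableOn_Ioc hs)]
    abel
  calc dist (traj x α t) (traj x α s) = ‖∫ r in Ioc s t, α r‖ := by rw [dist_eq_norm, hsplit]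
    _ ≤ 1 * volume.real (Ioc s t) := by
      refine norm_setIntegral_le_of_norm_le_const_ae' (by simp) ?_
      filter_upwards [hα.2] with r hr hmem using hr (hs.trans hmem.1.le)
    _ = t - s := by simp [measureReal_def, hst]

lemma Admissible.infDist_traj_le {α : ℝ → Euc n} (hα : Admissible α) (M : Set (Euc n))
    (x : Euc n) {s t : ℝ} (hs : 0 ≤ s) (ht : 0 ≤ t) :
    infDist (traj x α t) M ≤ infDist (traj x α s) M + |t - s| := by
  refine infDist_le_infDist_add_dist.trans (add_le_add le_rfl ?_)
  rcases le_total s t with hst | hts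
  · simpa [abs_of_nonneg (sub_nonneg.2 hst)] using hα.dist_traj_le x hs hst
  · simpa [dist_comm, abs_sub_comm, abs_of_nonneg (sub_nonneg.2 hts)]
      using hα.dist_traj_le x ht hts

lemma hitTime_le_ofReal {M : Set (Euc n)} {x : Euc n} {α : ℝ → Euc n} {s : ℝ} (hs : 0 ≤ s)
    (hsM : traj x α s ∈ M) : hitTime M x α ≤ ENNReal.ofReal s :=
  iInf₂_le_of_le s hs (iInf_le _ hsM)

lemma cost_le_setLIntegral_Ioc (M : Set (Euc n)) (l : Euc n → ℝ) {x : Euc n}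
    {α : ℝ → Euc n} {T : ℝ} (hT : hitTime M x α ≤ ENNReal.ofReal T) :
    cost M l x α ≤ ∫⁻ s in Ioc 0 T, ENNReal.ofReal (l (traj x α s)) := by
  refine lintegral_mono_set fun s ⟨hs, hsT⟩ ↦ ⟨hs, ?_⟩
  by_contra! hTs
  exact (hsT.trans_le hT).not_ge (ENNReal.ofReal_le_ofReal hTs.le)

lemma setLIntegral_le_cost (M : Set (Euc n)) (l : Euc n → ℝ) {x : Euc n}
    {α : ℝ → Euc n} {a b : ℝ} (ha : 0 ≤ a) (hb : ENNReal.ofReal b < hitTime M x α) :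
    ∫⁻ s in Ioc a b, ENNReal.ofReal (l (traj x α s)) ≤ cost M l x α :=
  lintegral_mono_set fun _ ⟨has, hsb⟩ ↦
    ⟨ha.trans_lt has, (ENNReal.ofReal_le_ofReal hsb).trans_lt hb⟩

/-- Steering straight to a nearest point of `M` at unit speed. -/
lemma valE_le_ofReal_mul_infDist {M : Set (Euc n)} {l : Euc n → ℝ} (hMne : M.Nonempty)
    (hMcl : IsClosed M) {C : ℝ} (hC : ∀ z, l z ≤ C) (hC0 : 0 ≤ C) (x : Euc n) :
    valE M l x ≤ ENNReal.ofReal (C * infDist x M) := by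
  obtain ⟨p, hpM, hpx⟩ := hMcl.exists_infDist_eq_dist hMne x
  set d := infDist x M
  have hd0 : 0 ≤ d := infDist_nonneg
  have hd : ‖p - x‖ = d := by rw [hpx, dist_comm, dist_eq_norm]
  set u : Euc n := d⁻¹ • (p - x)
  have hadm : Admissible (fun _ : ℝ ↦ u) := ⟨measurable_const, ae_of_all _ fun _ _ ↦ by
    rw [norm_smul, hd, norm_inv, Real.norm_of_nonneg hd0]
    exact inv_mul_le_one_of_le₀ le_rfl hd0⟩
  have hreach : traj x (fun _ ↦ u) d = p := by
    rw [traj_const x u hd0, smul_smul]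
    rcases eq_or_ne d 0 with h0 | h0
    · rw [h0, norm_eq_zero, sub_eq_zero] at hd
      simp [hd]
    · simp [mul_inv_cancel₀ h0]
  calc valE M l x ≤ cost M l x (fun _ ↦ u) := iInf₂_le _ hadm
    _ ≤ ∫⁻ s in Ioc 0 d, ENNReal.ofReal (l (traj x (fun _ ↦ u) s)) :=
      cost_le_setLIntegral_Ioc M l (hitTime_le_ofReal hd0 (hreach ▸ hpM))
    _ ≤ ∫⁻ _ in Ioc 0 d, ENNReal.ofReal C :=
      lintegral_mono fun _ ↦ ENNReal.ofReal_le_ofReal (hC _)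
    _ = ENNReal.ofReal (C * d) := by
      rw [setLIntegral_const, Real.volume_Ioc, sub_zero, ENNReal.ofReal_mul hC0]

lemma tendsto_setLIntegral_Ioi_atTop_zero {μ : Measure ℝ} [SFinite μ] {f : ℝ → ℝ≥0∞} {a : ℝ}
    (hf : ∫⁻ s in Ioi a, f s ∂μ ≠ ∞) :
    Tendsto (fun t ↦ ∫⁻ s in Ioi t, f s ∂μ) atTop (𝓝 0) := by
  have hempty : ⋂ t : ℝ, Ioi t = ∅ :=
    eq_empty_of_forall_notMem fun s hs ↦ lt_irrefl s (mem_iInter.1 hs s)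
  simpa [Function.comp_def, withDensity_apply', hempty] using tendsto_measure_iInter_atTop
    (μ := μ.withDensity f) (fun t ↦ measurableSet_Ioi.nullMeasurableSet)
    (fun _ _ h ↦ Ioi_subset_Ioi h) ⟨a, by rwa [withDensity_apply']⟩

/-- Trajectories are 1-Lipschitz, so one that is `2δ`-far from `M` at time `t` stays `δ`-far
from `M` on a whole window of length `δ` containing `t`. -/
lemma ofReal_mul_le_setLIntegral_of_far {M : Set (Euc n)} {l : Euc n → ℝ} {x : Euc n}
    {α : ℝ → Euc n} (hα : Admissible α) {δ g a t : ℝ}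
    (hl : ∀ y, δ < infDist y M → g ≤ l y) (ha : 0 ≤ a) (hat : a ≤ t) (hta : t ≤ a + δ)
    (hfar : 2 * δ < infDist (traj x α t) M) :
    ENNReal.ofReal g * ENNReal.ofReal δ ≤
      ∫⁻ s in Ioc a (a + δ), ENNReal.ofReal (l (traj x α s)) := by
  calc ENNReal.ofReal g * ENNReal.ofReal δ = ∫⁻ _ in Ioc a (a + δ), ENNReal.ofReal g := by
        rw [setLIntegral_const, Real.volume_Ioc, add_sub_cancel_left]
    _ ≤ ∫⁻ s in Ioc a (a + δ), ENNReal.ofReal (l (traj x α s)) := by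
      refine setLIntegral_mono' measurableSet_Ioc fun s hs ↦ ENNReal.ofReal_le_ofReal (hl _ ?_)
      have hts := hα.infDist_traj_le M x (ha.trans hs.1.le) (ha.trans hat)
      have : |t - s| ≤ δ := abs_le.2 ⟨by linarith [hs.2], by linarith [hs.1]⟩
      linarith

lemma extDist_nonneg (M : Set (Euc n)) (x : Euc n) (α : ℝ → Euc n) (t : ℝ) :
    0 ≤ extDist M x α t := by
  unfold extDist
  split_ifs
  exacts [infDist_nonneg, le_rfl]

lemma extDist_le_two_mul_of_cost_lt {M : Set (Euc n)} {l : Euc n → ℝ} {x : Euc n}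
    {α : ℝ → Euc n} (hα : Admissible α) {δ g : ℝ} (hl : ∀ y, δ < infDist y M → g ≤ l y)
    (hx : infDist x M ≤ δ) (hcost : cost M l x α < ENNReal.ofReal g * ENNReal.ofReal δ)
    {t : ℝ} (ht : 0 ≤ t) : extDist M x α t ≤ 2 * δ := by
  have hδ : 0 ≤ δ := infDist_nonneg.trans hx
  unfold extDist
  split_ifs with hhit
  · by_contra! hfar
    have hδt : δ ≤ t := by
      have := hα.infDist_traj_le M x le_rfl ht
      rw [traj_zero, sub_zero, abs_of_nonneg ht] at this
      linarith
    refine hcost.not_ge ?_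
    calc ENNReal.ofReal g * ENNReal.ofReal δ
        ≤ ∫⁻ s in Ioc (t - δ) (t - δ + δ), ENNReal.ofReal (l (traj x α s)) :=
          ofReal_mul_le_setLIntegral_of_far hα hl (sub_nonneg.2 hδt) (by linarith) (by linarith)
            hfar
      _ ≤ cost M l x α := setLIntegral_le_cost M l (sub_nonneg.2 hδt) (by rwa [sub_add_cancel])
  · positivity

lemma eventually_extDist_le_two_mul {M : Set (Euc n)} {l : Euc n → ℝ} {x : Euc n}
    {α : ℝ → Euc n} (hα : Admissible α) {δ g : ℝ} (hδ : 0 < δ) (hg : 0 < g)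
    (hl : ∀ y, δ < infDist y M → g ≤ l y) (hcost : cost M l x α ≠ ∞) :
    ∀ᶠ t in atTop, extDist M x α t ≤ 2 * δ := by
  by_cases hT : hitTime M x α = ∞
  · replace hcost : ∫⁻ s in Ioi 0, ENNReal.ofReal (l (traj x α s)) ≠ ∞ := by
      simpa only [cost, hT, ENNReal.ofReal_lt_top, and_true, ← Ioi_def] using hcost
    have htail := (tendsto_setLIntegral_Ioi_atTop_zero hcost).eventually_lt_const
      (ENNReal.mul_pos (ENNReal.ofReal_pos.2 hg).ne' (ENNReal.ofReal_pos.2 hδ).ne')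
    filter_upwards [htail, eventually_ge_atTop 0] with t htail ht
    rw [extDist, if_pos (hT ▸ ENNReal.ofReal_lt_top)]
    by_contra! hfar
    exact htail.not_ge <| (ofReal_mul_le_setLIntegral_of_far hα hl ht le_rfl (by linarith)
      hfar).trans (lintegral_mono_set Ioc_subset_Ioi_self)
  · filter_upwards [eventually_ge_atTop (hitTime M x α).toReal] with t ht
    rw [extDist, if_neg (ENNReal.ofReal_toReal hT ▸ ENNReal.ofReal_le_ofReal ht).not_gt]
    positivity

end ValueFunctionStability

theorem stmt17_general {n : ℕ} (M : Set (Euc n)) (l : Euc n → ℝ)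
    (hMne : M.Nonempty) (hMcl : IsClosed M)
    (hlbd : BddAbove (Set.range l))
    (hlpos : ∀ z ∉ M, 0 < l z) (hlzero : ∀ z ∈ M, l z = 0)
    (γ : ℝ → ℝ)
    (hH : ∀ δ : ℝ, 0 < δ → 0 < γ δ ∧
      γ δ < sInf (l '' {y : Euc n | δ < Metric.infDist y M})) :
    (∀ ε : ℝ, 0 < ε → ∃ η : ℝ, 0 < η ∧ ∀ x : Euc n, Metric.infDist x M ≤ η →
      ∀ α : ℝ → Euc n, IsOptimal M l x α → ∀ t : ℝ, 0 ≤ t → extDist M x α t ≤ ε) ∧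
    (∀ x : Euc n, ∀ α : ℝ → Euc n, IsOptimal M l x α →
      Tendsto (fun t : ℝ => extDist M x α t) atTop (𝓝 0)) := by
  have hl0 (z : Euc n) : 0 ≤ l z := by
    by_cases hz : z ∈ M
    exacts [(hlzero z hz).ge, (hlpos z hz).le]
  have hlγ (δ : ℝ) (hδ : 0 < δ) (y : Euc n) (hy : δ < infDist y M) : γ δ ≤ l y :=
    (hH δ hδ).2.le.trans (csInf_le ⟨0, forall_mem_image.2 fun z _ ↦ hl0 z⟩ ⟨y, hy, rfl⟩)
  obtain ⟨C, hC0, hC⟩ : ∃ C : ℝ, 0 < C ∧ ∀ z, l z ≤ C := by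
    obtain ⟨B, hB⟩ := hlbd
    exact ⟨max B 1, by positivity, fun z ↦ (hB ⟨z, rfl⟩).trans (le_max_left B 1)⟩
  have hcost {x : Euc n} {α : ℝ → Euc n} (hα : IsOptimal M l x α) :
      cost M l x α ≤ ENNReal.ofReal (C * infDist x M) :=
    hα.2 ▸ valE_le_ofReal_mul_infDist hMne hMcl hC hC0.le x
  refine ⟨fun ε hε ↦ ?_, fun x α hα ↦ ?_⟩
  · obtain ⟨δ, hδ, rfl⟩ : ∃ δ, 0 < δ ∧ ε = 2 * δ := ⟨ε / 2, half_pos hε, by ring⟩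
    have hc : 0 < γ δ * δ := mul_pos (hH δ hδ).1 hδ
    refine ⟨min δ (γ δ * δ / (2 * C)), by positivity, fun x hx α hα t ht ↦ ?_⟩
    have hCx : C * infDist x M < γ δ * δ := calc
      C * infDist x M ≤ C * (γ δ * δ / (2 * C)) := by gcongr; exact hx.trans (min_le_right _ _)
      _ = γ δ * δ / 2 := by field_simp
      _ < γ δ * δ := half_lt_self hc
    have hcost_lt : cost M l x α < ENNReal.ofReal (γ δ) * ENNReal.ofReal δ := by
      rw [← ENNReal.ofReal_mul (hH δ hδ).1.le]
      exact (hcost hα).trans_lt ((ENNReal.ofReal_lt_ofReal_iff hc).2 hCx)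
    exact extDist_le_two_mul_of_cost_lt hα.1 (hlγ δ hδ) (hx.trans (min_le_left _ _)) hcost_lt ht
  · refine tendsto_order.2 ⟨fun a ha ↦ .of_forall fun t ↦ ha.trans_le (extDist_nonneg M x α t),
      fun a ha ↦ ?_⟩
    have hδ : 0 < a / 3 := by positivity
    filter_upwards [eventually_extDist_le_two_mul hα.1 hδ (hH _ hδ).1 (hlγ _ hδ)
      ((hcost hα).trans_lt ENNReal.ofReal_lt_top).ne] with t ht
    linarith

/-- under assumptions (F) and (H), the target `M` is Lyapunov stable and
globally asymptotically stable for optimal trajectories (extended to stay in `M` after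
the hitting time). -/
theorem stmt17 {n : ℕ} (M : Set (Euc n)) (l : Euc n → ℝ)
    (hMne : M.Nonempty) (hMcl : IsClosed M)
    (hlc : Continuous l) (hlbd : BddAbove (Set.range l))
    (hlpos : ∀ z ∉ M, 0 < l z) (hlzero : ∀ z ∈ M, l z = 0)
    (γ : ℝ → ℝ)
    (hH : ∀ δ : ℝ, 0 < δ → 0 < γ δ ∧
      γ δ < sInf (l '' {y : Euc n | δ < Metric.infDist y M})) :
    (∀ ε : ℝ, 0 < ε → ∃ η : ℝ, 0 < η ∧ ∀ x : Euc n, Metric.infDist x M ≤ η →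
      ∀ α : ℝ → Euc n, IsOptimal M l x α → ∀ t : ℝ, 0 ≤ t → extDist M x α t ≤ ε) ∧
    (∀ x : Euc n, ∀ α : ℝ → Euc n, IsOptimal M l x α →
      Tendsto (fun t : ℝ => extDist M x α t) atTop (𝓝 0)) :=
  stmt17_general M l hMne hMcl hlbd hlpos hlzero γ hH
end
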